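/- No standard nonexpansive simple, properly ordered Bratteli-Vershik system is conjugate to any odometer. -/

import Mathlib

set_option autoImplicit false

/-- An ordered Bratteli diagram: finite nonempty vertex sets `V n`, a single root
vertex at level `0`, finite edge sets `E n` (edges from level `n` to level `n+1`,
multiple edges allowed), every vertex has an outgoing edge, every non-root vertex
an incoming edge, and the edges into each vertex carry a linear order, encoded by
the relation `elt` which relates only edges with the same target. -/
structure BDiagram where
  V : ℕ → Type
  E : ℕ → Type
  fintV : ∀ n, Fintype (V n)
  fintE : ∀ n, Fintype (E n)
  nonV : ∀ n, Nonempty (V n)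
  rootSubsingleton : Subsingleton (V 0)
  src : ∀ {n}, E n → V n
  tgt : ∀ {n}, E n → V (n + 1)
  hasOut : ∀ (n : ℕ) (v : V n), ∃ e : E n, src e = v
  hasIn : ∀ (n : ℕ) (v : V (n + 1)), ∃ e : E n, tgt e = v
  elt : ∀ {n}, E n → E n → Prop
  elt_tgt : ∀ (n : ℕ) (e f : E n), elt e f → tgt e = tgt f
  elt_irrefl : ∀ (n : ℕ) (e : E n), ¬ elt e e
  elt_trans : ∀ (n : ℕ) (e f g : E n), elt e f → elt f g → elt e g
  elt_total : ∀ (n : ℕ) (e f : E n), tgt e = tgt f → e ≠ f → elt e f ∨ elt f e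

namespace BDiagram

variable (B : BDiagram)

def castV {m n : ℕ} (h : m = n) (v : B.V m) : B.V n := h ▸ v

/-- An edge is minimal if no edge (into the same target) is below it. -/
def IsMinEdge {n : ℕ} (e : B.E n) : Prop := ∀ e' : B.E n, ¬ B.elt e' e

/-- An edge is maximal if no edge (into the same target) is above it. -/
def IsMaxEdge {n : ℕ} (e : B.E n) : Prop := ∀ e' : B.E n, ¬ B.elt e e'

/-- The space of infinite paths from the root. -/
def PathSpace : Type := { x : ∀ n, B.E n // ∀ n, B.tgt (x n) = B.src (x (n + 1)) }

def IsMinPath (x : B.PathSpace) : Prop := ∀ n, B.IsMinEdge (x.1 n)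

def IsMaxPath (x : B.PathSpace) : Prop := ∀ n, B.IsMaxEdge (x.1 n)

/-- Properly ordered: unique minimal and unique maximal path. -/
def ProperlyOrdered : Prop :=
  (∃! x : B.PathSpace, B.IsMinPath x) ∧ (∃! x : B.PathSpace, B.IsMaxPath x)

/-- The partial order on cofinal paths: `x < y` iff they eventually agree and at the
last disagreement the edge of `x` is below the edge of `y`. -/
def pathLT (x y : B.PathSpace) : Prop :=
  ∃ N : ℕ, B.elt (x.1 N) (y.1 N) ∧ ∀ n : ℕ, N < n → x.1 n = y.1 n

/-- `T` is the Vershik map: each non-maximal path goes to its successor, and each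
maximal path goes to a minimal path. -/
def IsVershik (T : B.PathSpace ≃ B.PathSpace) : Prop :=
  (∀ x : B.PathSpace, ¬ B.IsMaxPath x →
    B.pathLT x (T x) ∧ ∀ z : B.PathSpace, B.pathLT x z → ¬ B.pathLT z (T x)) ∧
  (∀ x : B.PathSpace, B.IsMaxPath x → B.IsMinPath (T x))

/-- `f` is a chain of consecutive edges on levels `[a, b)`. -/
def SegOn (f : ∀ i, B.E i) (a b : ℕ) : Prop :=
  ∀ i : ℕ, a ≤ i → i + 1 < b → B.tgt (f i) = B.src (f (i + 1))

/-- Simplicity: some telescoping has complete connections between adjacent levels. -/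
def Simple : Prop :=
  ∃ ns : ℕ → ℕ, StrictMono ns ∧ ns 0 = 0 ∧
    ∀ (l c : ℕ), ns (l + 1) = c + 1 →
      ∀ (v : B.V (ns l)) (w : B.V (c + 1)),
        ∃ f : ∀ i, B.E i, B.SegOn f (ns l) (c + 1) ∧ B.src (f (ns l)) = v ∧ B.tgt (f c) = w

/-- The natural (Cantor) topology on the path space, induced from the product of
the discrete topologies on the edge sets. -/
def pathTop : TopologicalSpace B.PathSpace :=
  TopologicalSpace.induced Subtype.val (@Pi.topologicalSpace ℕ B.E (fun _ => ⊥))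

/-- Integer iterates of a bijection of the path space. -/
def iterZ (T : B.PathSpace ≃ B.PathSpace) (m : ℤ) : B.PathSpace ≃ B.PathSpace :=
  (T : Equiv.Perm B.PathSpace) ^ m

/-- Two paths have the same `k`-coding: for every time `m` the initial segments of
`T^m x` and `T^m y` from the root to level `k` coincide. -/
def SameCoding (T : B.PathSpace ≃ B.PathSpace) (k : ℕ) (x y : B.PathSpace) : Prop :=
  ∀ (m : ℤ) (i : ℕ), i < k → ((B.iterZ T m) x).1 i = ((B.iterZ T m) y).1 i

/-- A depth `k` pair: distinct paths with the same `k`-coding but not the same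
`(k+1)`-coding. -/
def DepthPair (T : B.PathSpace ≃ B.PathSpace) (k : ℕ) (x y : B.PathSpace) : Prop :=
  x ≠ y ∧ B.SameCoding T k x y ∧ ¬ B.SameCoding T (k + 1) x y

/-- The pair `x, y` has a `j` cut: for some time `m`, both `T^m x` and `T^m y` are
minimal from the root into level `j`. -/
def HasCut (T : B.PathSpace ≃ B.PathSpace) (j : ℕ) (x y : B.PathSpace) : Prop :=
  ∃ m : ℤ, (∀ i : ℕ, i < j → B.IsMinEdge (((B.iterZ T m) x).1 i)) ∧
    (∀ i : ℕ, i < j → B.IsMinEdge (((B.iterZ T m) y).1 i))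

/-- Nonexpansive: for every `k ≥ 1` there are two distinct paths with the same
`k`-coding. -/
def Nonexpansive (T : B.PathSpace ≃ B.PathSpace) : Prop :=
  ∀ k : ℕ, 1 ≤ k → ∃ x y : B.PathSpace, x ≠ y ∧ B.SameCoding T k x y

/-- Well timed: for every `k ≥ 1` and every `j > k` there is a depth `k` pair with
a `j` cut. -/
def WellTimed (T : B.PathSpace ≃ B.PathSpace) : Prop :=
  ∀ k : ℕ, 1 ≤ k → ∀ j : ℕ, k < j →
    ∃ x y : B.PathSpace, B.DepthPair T k x y ∧ B.HasCut T j x y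

/-- Very well timed: for every `k ≥ 1` there is a depth `k` pair having a `j` cut
for every `j > k`. -/
def VeryWellTimed (T : B.PathSpace ≃ B.PathSpace) : Prop :=
  ∀ k : ℕ, 1 ≤ k →
    ∃ x y : B.PathSpace, B.DepthPair T k x y ∧ ∀ j : ℕ, k < j → B.HasCut T j x y

/-- Weakly well timed: for infinitely many `k ≥ 1`, for every `j > k` there is a
depth `k` pair with a `j` cut. -/
def WeaklyWellTimed (T : B.PathSpace ≃ B.PathSpace) : Prop :=
  ∀ K : ℕ, ∃ k : ℕ, K ≤ k ∧ 1 ≤ k ∧ ∀ j : ℕ, k < j →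
    ∃ x y : B.PathSpace, B.DepthPair T k x y ∧ B.HasCut T j x y

/-- Untimed: for every `k ≥ 1` there is a `j > k` such that no depth `k` pair has a
`j` cut. -/
def Untimed (T : B.PathSpace ≃ B.PathSpace) : Prop :=
  ∀ k : ℕ, 1 ≤ k → ∃ j : ℕ, k < j ∧
    ∀ x y : B.PathSpace, B.DepthPair T k x y → ¬ B.HasCut T j x y

/-- Very untimed: for every `k ≥ 1`, no depth `k` pair has a `(k+1)` cut. -/
def VeryUntimed (T : B.PathSpace ≃ B.PathSpace) : Prop :=
  ∀ k : ℕ, 1 ≤ k →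
    ∀ x y : B.PathSpace, B.DepthPair T k x y → ¬ B.HasCut T (k + 1) x y

/-- Finite paths from the root to level `n`. -/
def FinPath (n : ℕ) : Type :=
  { f : (i : Fin n) → B.E i.val //
    ∀ (i : ℕ) (h : i + 1 < n), B.tgt (f ⟨i, by omega⟩) = B.src (f ⟨i + 1, h⟩) }

/-- The lexicographic (from the end) order on finite paths to level `n` induced by
the orders on the edges. -/
def finLT {n : ℕ} (p q : B.FinPath n) : Prop :=
  ∃ (N : ℕ) (h : N < n), B.elt (p.1 ⟨N, h⟩) (q.1 ⟨N, h⟩) ∧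
    ∀ (i : ℕ) (hi : i < n), N < i → p.1 ⟨i, hi⟩ = q.1 ⟨i, hi⟩

/-- The finite path `p` to level `n` ends at the vertex `v`. -/
def EndsAt {n : ℕ} (p : B.FinPath n) (v : B.V n) : Prop :=
  ∀ (m : ℕ) (h : n = m + 1), B.tgt (p.1 ⟨m, by omega⟩) = B.castV h v

/-- The initial segment of an infinite path, from the root to level `n`. -/
def pathInit (x : B.PathSpace) (n : ℕ) : B.FinPath n :=
  ⟨fun i => x.1 i.val, fun i _ => x.2 i⟩

/-- The vertex of an infinite path at level `n`. -/
def pathVert (x : B.PathSpace) (n : ℕ) : B.V n := B.src (x.1 n)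

theorem pathInit_endsAt (x : B.PathSpace) (n : ℕ) :
    B.EndsAt (B.pathInit x n) (B.pathVert x n) := by
  intro m h
  subst h
  exact x.2 m

/-- Truncation of a finite path to a lower level. -/
def truncTo {n : ℕ} (k : ℕ) (hk : k ≤ n) (p : B.FinPath n) : B.FinPath k :=
  ⟨fun i => p.1 ⟨i.val, by omega⟩, fun i h => p.2 i (by omega)⟩

/-- Paths `x, x'` are `k`-equivalent at level `n`: there is an order isomorphism
between the sets of finite paths from the root into their level-`n` vertices which
preserves truncations to level `k` (equality of `k`-basic blocks) and which matches
the initial segment of `x` with the initial segment of `x'` (the "dot" is in the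
same place). -/
def KEquivAt (k n : ℕ) (x x' : B.PathSpace) : Prop :=
  ∃ φ : { p : B.FinPath n // B.EndsAt p (B.pathVert x n) } ≃
      { p : B.FinPath n // B.EndsAt p (B.pathVert x' n) },
    (∀ p q, B.finLT p.1 q.1 ↔ B.finLT (φ p).1 (φ q).1) ∧
    (∀ p (i : ℕ) (hik : i < k) (hin : i < n), ((φ p).1).1 ⟨i, hin⟩ = (p.1).1 ⟨i, hin⟩) ∧
    φ ⟨B.pathInit x n, B.pathInit_endsAt x n⟩ = ⟨B.pathInit x' n, B.pathInit_endsAt x' n⟩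

/-- Paths are `k`-equivalent: they agree from the root to level `k` and are
`k`-equivalent at every level `n > k`. -/
def KEquivPaths (k : ℕ) (x x' : B.PathSpace) : Prop :=
  (∀ i : ℕ, i < k → x.1 i = x'.1 i) ∧ ∀ n : ℕ, k < n → B.KEquivAt k n x x'

/-- Standard nonexpansive: for every `k ≥ 1` there is a pair of distinct
`k`-equivalent paths. -/
def SNE : Prop := ∀ k : ℕ, 1 ≤ k → ∃ x x' : B.PathSpace, x ≠ x' ∧ B.KEquivPaths k x x'

/-!  ### Telescoping  -/

theorem castV_eq_of_heq {m n : ℕ} (h : m = n) {v : B.V m} {w : B.V n} (hw : HEq v w) :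
    B.castV h v = w := by
  subst h
  exact eq_of_heq hw

theorem castV_heq {m n : ℕ} (h : m = n) (v : B.V m) : HEq (B.castV h v) v := by
  subst h
  rfl

theorem castV_inj {m n : ℕ} (h : m = n) {v w : B.V m}
    (hvw : B.castV h v = B.castV h w) : v = w := by
  subst h
  exact hvw

def castE {m n : ℕ} (h : m = n) (e : B.E m) : B.E n := h ▸ e

noncomputable def chainFrom (a : ℕ) (v : B.V a) : (i : ℕ) → B.E (a + i)
  | 0 => (B.hasOut a v).choose
  | i + 1 => (B.hasOut (a + i + 1) (B.tgt (chainFrom a v i))).choose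

theorem chainFrom_src_zero (a : ℕ) (v : B.V a) : B.src (B.chainFrom a v 0) = v :=
  (B.hasOut a v).choose_spec

theorem chainFrom_src_succ (a : ℕ) (v : B.V a) (i : ℕ) :
    B.src (B.chainFrom a v (i + 1)) = B.tgt (B.chainFrom a v i) :=
  (B.hasOut (a + i + 1) (B.tgt (B.chainFrom a v i))).choose_spec

noncomputable def chainTo (a : ℕ) : (j : ℕ) → (w : B.V (a + j + 1)) → (i : ℕ) → i ≤ j → B.E (a + i)
  | 0, w, i, _ => B.castE (by omega : a + 0 = a + i) (B.hasIn a w).choose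
  | j + 1, w, i, _ =>
      if h : i ≤ j then chainTo a j (B.src (B.hasIn (a + j + 1) w).choose) i h
      else B.castE (by omega : a + (j + 1) = a + i) (B.hasIn (a + j + 1) w).choose

theorem chainTo_tgt_last (a : ℕ) : ∀ (j : ℕ) (w : B.V (a + j + 1)),
    B.tgt (B.chainTo a j w j le_rfl) = w := by
  intro j w
  cases j with
  | zero =>
      simp only [chainTo]
      exact (B.hasIn a w).choose_spec
  | succ j =>
      simp only [chainTo]
      rw [dif_neg (by omega : ¬ j + 1 ≤ j)]
      exact (B.hasIn (a + j + 1) w).choose_spec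

theorem chainTo_chain (a : ℕ) : ∀ (j : ℕ) (w : B.V (a + j + 1)) (i : ℕ) (h : i + 1 ≤ j)
    (h' : i ≤ j), B.tgt (B.chainTo a j w i h') = B.src (B.chainTo a j w (i + 1) h) := by
  intro j
  induction j with
  | zero => intro w i h h'; omega
  | succ j ih =>
      intro w i h h'
      by_cases hij : i + 1 ≤ j
      · simp only [chainTo]
        rw [dif_pos (by omega : i ≤ j), dif_pos hij]
        exact ih _ i hij (by omega)
      · have hi : i = j := by omega
        subst hi
        simp only [chainTo]
        rw [dif_pos (le_refl i), dif_neg (by omega : ¬ i + 1 ≤ i)]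
        exact B.chainTo_tgt_last a i _

def TelE (a b : ℕ) : Type :=
  { f : (i : Fin (b - a)) → B.E (a + i.val) //
    ∀ (i : ℕ) (h : i + 1 < b - a), B.tgt (f ⟨i, by omega⟩) = B.src (f ⟨i + 1, h⟩) }

def telSrc {a b : ℕ} (hab : a < b) (f : B.TelE a b) : B.V a :=
  B.src (f.1 ⟨0, by omega⟩)

def telTgt {a b : ℕ} (hab : a < b) (f : B.TelE a b) : B.V b :=
  B.castV (by omega : a + (b - a - 1) + 1 = b) (B.tgt (f.1 ⟨b - a - 1, by omega⟩))

def telLT {a b : ℕ} (f g : B.TelE a b) : Prop :=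
  ∃ (N : ℕ) (h : N < b - a), B.elt (f.1 ⟨N, h⟩) (g.1 ⟨N, h⟩) ∧
    ∀ (i : ℕ) (hi : i < b - a), N < i → f.1 ⟨i, hi⟩ = g.1 ⟨i, hi⟩

noncomputable def Telescope (ns : ℕ → ℕ) (hmono : StrictMono ns) (h0 : ns 0 = 0) : BDiagram where
  V l := B.V (ns l)
  E l := B.TelE (ns l) (ns (l + 1))
  fintV l := B.fintV (ns l)
  fintE l := by
    classical
    letI : ∀ i : Fin (ns (l + 1) - ns l), Fintype (B.E (ns l + i.val)) := fun i => B.fintE _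
    exact Subtype.fintype _
  nonV l := B.nonV (ns l)
  rootSubsingleton := by show Subsingleton (B.V (ns 0)); rw [h0]; exact B.rootSubsingleton
  src {l} f := B.telSrc (hmono (Nat.lt_succ_self l)) f
  tgt {l} f := B.telTgt (hmono (Nat.lt_succ_self l)) f
  hasOut := by
    intro l v
    refine ⟨⟨fun i => B.chainFrom (ns l) v i.val,
      fun i h => (B.chainFrom_src_succ (ns l) v i).symm⟩, ?_⟩
    exact B.chainFrom_src_zero (ns l) v
  hasIn := by
    intro l w
    have hab : ns l < ns (l + 1) := hmono (Nat.lt_succ_self l)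
    have hj : ns l + (ns (l + 1) - ns l - 1) + 1 = ns (l + 1) := by omega
    refine ⟨⟨fun i => B.chainTo (ns l) (ns (l + 1) - ns l - 1) (B.castV hj.symm w) i.val
        (by omega), fun i h => B.chainTo_chain _ _ _ i (by omega) (by omega)⟩, ?_⟩
    show B.castV (by omega) (B.tgt (B.chainTo (ns l) (ns (l + 1) - ns l - 1)
      (B.castV hj.symm w) (ns (l + 1) - ns l - 1) (by omega))) = w
    rw [B.chainTo_tgt_last]
    exact B.castV_eq_of_heq _ (B.castV_heq _ w)
  elt {l} f g := B.telLT f g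
  elt_tgt := by
    rintro l f g ⟨N, hN, hlt, hgt⟩
    show B.telTgt _ f = B.telTgt _ g
    unfold telTgt
    refine congrArg (B.castV _) ?_
    rcases eq_or_lt_of_le (show N ≤ ns (l + 1) - ns l - 1 by omega) with h | h
    · subst h
      exact B.elt_tgt _ _ _ hlt
    · exact congrArg B.tgt (hgt _ (by omega) h)
  elt_irrefl := by
    rintro l f ⟨N, h, hlt, -⟩
    exact B.elt_irrefl _ _ hlt
  elt_trans := by
    rintro l f g h ⟨N₁, hN₁, hlt₁, hgt₁⟩ ⟨N₂, hN₂, hlt₂, hgt₂⟩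
    rcases lt_trichotomy N₁ N₂ with hc | hc | hc
    · exact ⟨N₂, hN₂, by rw [hgt₁ N₂ hN₂ hc]; exact hlt₂,
        fun i hi hN => (hgt₁ i hi (by omega)).trans (hgt₂ i hi hN)⟩
    · subst hc
      exact ⟨N₁, hN₁, B.elt_trans _ _ _ _ hlt₁ hlt₂,
        fun i hi hN => (hgt₁ i hi hN).trans (hgt₂ i hi hN)⟩
    · refine ⟨N₁, hN₁, ?_, fun i hi hN => (hgt₁ i hi hN).trans (hgt₂ i hi (by omega))⟩
      rw [← hgt₂ N₁ hN₁ hc]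
      exact hlt₁
  elt_total := by
    intro l f g htgt hne
    classical
    have hab : ns l < ns (l + 1) := hmono (Nat.lt_succ_self l)
    set b := ns (l + 1) - ns l with hb
    have hex : ∃ N, ∃ h : N < b, f.1 ⟨N, h⟩ ≠ g.1 ⟨N, h⟩ := by
      by_contra hco
      push_neg at hco
      exact hne (Subtype.ext (funext fun i => hco i.val i.isLt))
    set P : ℕ → Prop := fun N => ∃ h : N < b, f.1 ⟨N, h⟩ ≠ g.1 ⟨N, h⟩ with hP
    obtain ⟨N₀, hN₀⟩ := hex
    set N := Nat.findGreatest P b with hNdef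
    have hPN : P N := Nat.findGreatest_spec (le_of_lt hN₀.choose) hN₀
    have hafter : ∀ i (hi : i < b), N < i → f.1 ⟨i, hi⟩ = g.1 ⟨i, hi⟩ := by
      intro i hi hNi
      by_contra hcon
      exact Nat.findGreatest_is_greatest hNi (le_of_lt hi) ⟨hi, hcon⟩
    clear_value N
    obtain ⟨hNb, hNne⟩ := hPN
    have htgtN : B.tgt (f.1 ⟨N, hNb⟩) = B.tgt (g.1 ⟨N, hNb⟩) := by
      rcases eq_or_lt_of_le (show N ≤ b - 1 by omega) with h | h
      · -- N is the last index; use equality of targets of the composite edges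
        subst h
        exact B.castV_inj _ htgt
      · have h2 : f.1 ⟨N + 1, by omega⟩ = g.1 ⟨N + 1, by omega⟩ :=
          hafter (N + 1) (by omega) (by omega)
        rw [f.2 N (by omega), g.2 N (by omega), h2]
    rcases B.elt_total _ _ _ htgtN hNne with h | h
    · exact Or.inl ⟨N, hNb, h, hafter⟩
    · exact Or.inr ⟨N, hNb, h, fun i hi hN => (hafter i hi hN).symm⟩

def teleMap (ns : ℕ → ℕ) (hmono : StrictMono ns) (h0 : ns 0 = 0) (x : B.PathSpace) :
    (B.Telescope ns hmono h0).PathSpace :=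
  ⟨fun l => ⟨fun i => x.1 (ns l + i.val), fun i _ => x.2 (ns l + i)⟩, fun l => by
    have hab : ns l < ns (l + 1) := hmono (Nat.lt_succ_self l)
    have hm : ns l + (ns (l + 1) - ns l - 1) + 1 = ns (l + 1) := by omega
    show B.castV _ (B.tgt (x.1 (ns l + (ns (l + 1) - ns l - 1)))) = B.src (x.1 (ns (l + 1) + 0))
    rw [x.2 (ns l + (ns (l + 1) - ns l - 1))]
    exact B.castV_eq_of_heq _ (by rw [hm]; exact HEq.rfl)⟩

/-- Level `n+1` is uniformly ordered: there is a single nonempty block `P` of paths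
from the root to level `n` such that the `n`-basic block at every vertex at level
`n+1` is a positive power of `P`. -/
def UniformlyOrderedLevel (n : ℕ) : Prop :=
  ∃ (p : ℕ) (hp : 0 < p) (P : Fin p → B.FinPath n),
    ∀ v : B.V (n + 1), ∃ (m : ℕ), 0 < m ∧
      ∃ enum : Fin (m * p) ≃ { q : B.FinPath (n + 1) // B.EndsAt q v },
        (∀ i j : Fin (m * p), i < j ↔ B.finLT (enum i).1 (enum j).1) ∧
        (∀ i : Fin (m * p),
          B.truncTo n (Nat.le_succ n) (enum i).1 = P ⟨i.val % p, Nat.mod_lt _ hp⟩)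

/-- The ordinal label of an edge: its position in the linear order on the edges
into its target. -/
noncomputable def edgeLabel {n : ℕ} (e : B.E n) : ℕ := Nat.card { e' : B.E n // B.elt e' e }

/-- Deterministic: for every `n ≥ 1`, distinct edges with the same source at level
`n` have different ordinal labels. -/
def Deterministic : Prop :=
  ∀ n : ℕ, 1 ≤ n → ∀ e f : B.E n, B.src e = B.src f → e ≠ f →
    B.edgeLabel e ≠ B.edgeLabel f

end BDiagram

/-- A Bratteli–Vershik system: a simple, properly ordered ordered Bratteli diagram
together with its Vershik map. -/
structure BVSystem where
  B : BDiagram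
  T : B.PathSpace ≃ B.PathSpace
  proper : B.ProperlyOrdered
  simple : B.Simple
  vershik : B.IsVershik T

/-- Conjugacy of systems: an equivariant homeomorphism of the path spaces taking
minimal paths to minimal paths. -/
def Conjugate (S S' : BVSystem) : Prop :=
  ∃ φ : S.B.PathSpace ≃ S'.B.PathSpace,
    (@Continuous _ _ S.B.pathTop S'.B.pathTop φ) ∧
    (@Continuous _ _ S'.B.pathTop S.B.pathTop φ.symm) ∧
    (∀ x, φ (S.T x) = S'.T (φ x)) ∧
    (∀ x, S.B.IsMinPath x → S'.B.IsMinPath (φ x))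

/-- An odometer: a system whose diagram has exactly one vertex at every level. -/
def IsOdometer (S : BVSystem) : Prop := ∀ n, Subsingleton (S.B.V n)

/-!
Let `x ≠ x'` be `1`-equivalent. At every level `n` the `1`-equivalence matches the positions of the
prefixes of `x` and `x'` in their lexicographically ordered basic blocks, and the Vershik map runs
through a basic block one prefix at a time; so going back the same number `j` of steps makes both
`T⁻ʲ x` and `T⁻ʲ x'` minimal up to level `n`. Since the minimal path is unique, compactness forces
such paths to converge to it, so a conjugacy `φ` to an odometer sends them to paths agreeing up to
any prescribed level `ℓ`. In an odometer the prefix of length `ℓ` of `T y` depends only on that of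
`y`, so `T` permutes the finitely many prefixes of length `ℓ`; hence `φ x` and `φ x'` agree up to
level `ℓ` as well, and `φ x = φ x'`.
-/

/-- `T` induces a surjection, hence a bijection, of the finite range of `F`. -/
theorem Equiv.Perm.apply_eq_apply_iff_of_finite {α β : Type*} [Finite β] (T : Equiv.Perm α)
    (F : α → β) (hT : ∀ a b, F a = F b → F (T a) = F (T b)) (a b : α) :
    F (T a) = F (T b) ↔ F a = F b := by
  refine ⟨fun h => ?_, hT a b⟩
  have : Nonempty α := ⟨a⟩
  let g : β → β := fun y => F (T (Function.invFun F y))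
  have hg : ∀ a, g (F a) = F (T a) := fun a => hT _ _ (Function.invFun_eq ⟨a, rfl⟩)
  have hmaps : Set.MapsTo g (Set.range F) (Set.range F) := by
    rintro _ ⟨a, rfl⟩
    exact ⟨T a, (hg a).symm⟩
  have hsurj : Set.SurjOn g (Set.range F) (Set.range F) := by
    rintro _ ⟨a, rfl⟩
    exact ⟨F (T.symm a), ⟨_, rfl⟩, by rw [hg, T.apply_symm_apply]⟩
  have hinj := (((Set.toFinite (Set.range F)).surjOn_iff_bijOn_of_mapsTo hmaps).1 hsurj).injOn
  exact hinj ⟨a, rfl⟩ ⟨b, rfl⟩ (by rw [hg, hg, h])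

theorem Equiv.Perm.zpow_apply_rel_iff {α : Type*} (T : Equiv.Perm α) {R : α → α → Prop}
    (hR : ∀ a b, R (T a) (T b) ↔ R a b) (m : ℤ) (a b : α) :
    R ((T ^ m) a) ((T ^ m) b) ↔ R a b := by
  induction m using Int.induction_on generalizing a b with
  | zero => rfl
  | succ k ih => rw [zpow_add_one, Equiv.Perm.mul_apply, Equiv.Perm.mul_apply, ih, hR]
  | pred k ih =>
    rw [zpow_sub_one, Equiv.Perm.mul_apply, Equiv.Perm.mul_apply, ih, ← hR]
    simp only [Equiv.Perm.inv_def, Equiv.apply_symm_apply]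

namespace BDiagram

variable (B : BDiagram)

instance (n : ℕ) : Fintype (B.E n) := B.fintE n

instance (n : ℕ) : Finite (B.FinPath n) := by
  unfold FinPath
  infer_instance

theorem pathSpace_ext {x y : B.PathSpace} (h : ∀ i, x.1 i = y.1 i) : x = y :=
  Subtype.ext (funext h)

theorem finPath_ext {n : ℕ} {p q : B.FinPath n}
    (h : ∀ (i : ℕ) (hi : i < n), p.1 ⟨i, hi⟩ = q.1 ⟨i, hi⟩) : p = q :=
  Subtype.ext (funext fun i => h i.1 i.2)

theorem pathInit_eq_pathInit_iff {x y : B.PathSpace} {n : ℕ} :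
    B.pathInit x n = B.pathInit y n ↔ ∀ i < n, x.1 i = y.1 i :=
  ⟨fun h i hi => congrArg (fun p : B.FinPath n => p.1 ⟨i, hi⟩) h,
    fun h => B.finPath_ext fun i hi => h i hi⟩

theorem endsAt_pathInit_of_eq {x z : B.PathSpace} {n : ℕ} (h : z.1 n = x.1 n) :
    B.EndsAt (B.pathInit z n) (B.pathVert x n) := by
  have hv : B.pathVert z n = B.pathVert x n := congrArg B.src h
  exact hv ▸ B.pathInit_endsAt z n

theorem EndsAt.congr_vertex {B : BDiagram} {n : ℕ} {p q : B.FinPath n} {v w : B.V n}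
    (hqv : B.EndsAt q v) (hpv : B.EndsAt p v) (hpw : B.EndsAt p w) : B.EndsAt q w :=
  fun m h => (hqv m h).trans ((hpv m h).symm.trans (hpw m h))

theorem eq_of_isMinEdge_of_tgt_eq {i : ℕ} {e f : B.E i} (he : B.IsMinEdge e)
    (hf : B.IsMinEdge f) (h : B.tgt e = B.tgt f) : e = f := by
  by_contra hne
  rcases B.elt_total i e f h hne with hef | hfe
  exacts [hf e hef, he f hfe]

theorem finLT_irrefl {n : ℕ} (p : B.FinPath n) : ¬ B.finLT p p :=
  fun ⟨_, _, h, _⟩ => B.elt_irrefl _ _ h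

theorem finLT_trans {n : ℕ} {p q r : B.FinPath n} (hpq : B.finLT p q) (hqr : B.finLT q r) :
    B.finLT p r := by
  obtain ⟨N₁, hN₁, hlt₁, hagree₁⟩ := hpq
  obtain ⟨N₂, hN₂, hlt₂, hagree₂⟩ := hqr
  rcases lt_trichotomy N₁ N₂ with h | rfl | h
  · exact ⟨N₂, hN₂, hagree₁ N₂ hN₂ h ▸ hlt₂,
      fun i hi hN => (hagree₁ i hi (by omega)).trans (hagree₂ i hi hN)⟩
  · exact ⟨N₁, hN₁, B.elt_trans _ _ _ _ hlt₁ hlt₂,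
      fun i hi hN => (hagree₁ i hi hN).trans (hagree₂ i hi hN)⟩
  · exact ⟨N₁, hN₁, (hagree₂ N₁ hN₁ h).symm ▸ hlt₁,
      fun i hi hN => (hagree₁ i hi hN).trans (hagree₂ i hi (by omega))⟩

theorem finLT_trichotomous {n : ℕ} {v : B.V n} {p q : B.FinPath n} (hp : B.EndsAt p v)
    (hq : B.EndsAt q v) : B.finLT p q ∨ p = q ∨ B.finLT q p := by
  classical
  by_cases hpq : p = q
  · exact Or.inr (Or.inl hpq)
  -- compare at the last level where `p` and `q` differ
  obtain ⟨i₀, hi₀⟩ : ∃ i : Fin n, p.1 i ≠ q.1 i := by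
    by_contra! h
    exact hpq (Subtype.ext (funext h))
  obtain ⟨⟨N, hN⟩, hdiff, hlast⟩ := Finset.exists_max_image
    (Finset.univ.filter fun i : Fin n => p.1 i ≠ q.1 i) id ⟨i₀, by simpa using hi₀⟩
  have hdiff : p.1 ⟨N, hN⟩ ≠ q.1 ⟨N, hN⟩ := (Finset.mem_filter.1 hdiff).2
  have hagree : ∀ (i : ℕ) (hi : i < n), N < i → p.1 ⟨i, hi⟩ = q.1 ⟨i, hi⟩ := by
    intro i hi hNi
    by_contra h
    exact absurd (hlast ⟨i, hi⟩ (by simpa using h)) (not_le.2 hNi)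
  have htgt : B.tgt (p.1 ⟨N, hN⟩) = B.tgt (q.1 ⟨N, hN⟩) := by
    rcases Nat.lt_or_ge (N + 1) n with h | h
    · rw [p.2 N h, q.2 N h, hagree (N + 1) h (lt_add_one N)]
    · exact (hp N (by omega)).trans (hq N (by omega)).symm
  rcases B.elt_total N _ _ htgt hdiff with h | h
  · exact Or.inl ⟨N, hN, h, hagree⟩
  · exact Or.inr (Or.inr ⟨N, hN, h, fun i hi hNi => (hagree i hi hNi).symm⟩)

/-- Truncating its elements to level `k` gives the `k`-basic block at `v`. -/
abbrev Fiber (n : ℕ) (v : B.V n) : Type := { p : B.FinPath n // B.EndsAt p v }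

instance (n : ℕ) (v : B.V n) :
    IsStrictTotalOrder (B.Fiber n v) (fun p q => B.finLT p.1 q.1) where
  irrefl p := B.finLT_irrefl p.1
  trans _ _ _ := B.finLT_trans
  trichotomous p q hpq hqp := by
    rcases B.finLT_trichotomous p.2 q.2 with h | h | h
    exacts [absurd h hpq, Subtype.ext h, absurd h hqp]

noncomputable instance (n : ℕ) (v : B.V n) : LinearOrder (B.Fiber n v) :=
  @linearOrderOfSTO _ (fun p q => B.finLT p.1 q.1) _ (Classical.decRel _)

def dot (x : B.PathSpace) (n : ℕ) : B.Fiber n (B.pathVert x n) :=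
  ⟨B.pathInit x n, B.pathInit_endsAt x n⟩

def snoc {n : ℕ} (p : B.FinPath n) (e : B.E n) (h : B.EndsAt p (B.src e)) :
    B.FinPath (n + 1) :=
  ⟨fun i => if hi : i.1 < n then p.1 ⟨i.1, hi⟩ else B.castE (by omega) e, fun i hi => by
    by_cases hin : i + 1 < n
    · simp only [dif_pos hin, dif_pos (Nat.lt_of_succ_lt hin)]
      exact p.2 i hin
    · obtain rfl : n = i + 1 := by omega
      simp only [dif_pos (lt_add_one i), dif_neg (lt_irrefl _)]
      exact h i rfl⟩

theorem snoc_apply_last {n : ℕ} (p : B.FinPath n) (e : B.E n) (h : B.EndsAt p (B.src e)) :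
    (B.snoc p e h).1 ⟨n, lt_add_one n⟩ = e :=
  dif_neg (lt_irrefl n)

theorem endsAt_snoc {n : ℕ} (p : B.FinPath n) (e : B.E n) (h : B.EndsAt p (B.src e)) :
    B.EndsAt (B.snoc p e h) (B.tgt e) := by
  rintro m hm
  obtain rfl : m = n := by omega
  exact congrArg B.tgt (B.snoc_apply_last p e h)

theorem exists_finPath_endsAt : ∀ (n : ℕ) (v : B.V n), ∃ p : B.FinPath n, B.EndsAt p v
  | 0, _ => ⟨⟨fun i => i.elim0, fun _ h => by omega⟩, fun _ h => by omega⟩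
  | n + 1, v => by
    obtain ⟨e, rfl⟩ := B.hasIn n v
    obtain ⟨p, hp⟩ := exists_finPath_endsAt n (B.src e)
    exact ⟨B.snoc p e hp, B.endsAt_snoc p e hp⟩

def glue (x : B.PathSpace) (n : ℕ) (p : B.FinPath n) (hp : B.EndsAt p (B.pathVert x n)) :
    B.PathSpace :=
  ⟨fun i => if hi : i < n then p.1 ⟨i, hi⟩ else x.1 i, fun i => by
    by_cases hin : i + 1 < n
    · simp only [dif_pos hin, dif_pos (Nat.lt_of_succ_lt hin)]
      exact p.2 i hin
    · by_cases hi : i < n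
      · obtain rfl : n = i + 1 := by omega
        simp only [dif_pos hi, dif_neg hin]
        exact hp i rfl
      · simp only [dif_neg hi, dif_neg hin]
        exact x.2 i⟩

section Glue

variable {B} {x : B.PathSpace} {n : ℕ} {p : B.FinPath n} {hp : B.EndsAt p (B.pathVert x n)}

theorem glue_apply_of_lt {i : ℕ} (hi : i < n) : (B.glue x n p hp).1 i = p.1 ⟨i, hi⟩ :=
  dif_pos hi

theorem glue_apply_of_le {i : ℕ} (hi : n ≤ i) : (B.glue x n p hp).1 i = x.1 i :=
  dif_neg (not_lt.2 hi)

theorem pathInit_glue : B.pathInit (B.glue x n p hp) n = p :=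
  B.finPath_ext fun _ hi => glue_apply_of_lt (hp := hp) hi

theorem glue_eq_of_agree {z : B.PathSpace} (hpz : p = B.pathInit z n)
    (hz : ∀ i, n ≤ i → z.1 i = x.1 i) : B.glue x n p hp = z := by
  refine B.pathSpace_ext fun i => ?_
  rcases Nat.lt_or_ge i n with hi | hi
  · rw [glue_apply_of_lt hi, hpz]
    rfl
  · rw [glue_apply_of_le hi, hz i hi]

end Glue

theorem exists_apply_eq_of_tgt_eq (y : B.PathSpace) {i : ℕ} {e : B.E i}
    (he : B.tgt e = B.tgt (y.1 i)) : ∃ z : B.PathSpace, z.1 i = e ∧ ∀ j, i < j → z.1 j = y.1 j := by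
  obtain ⟨r, hr⟩ := B.exists_finPath_endsAt i (B.src e)
  have hend : B.EndsAt (B.snoc r e hr) (B.pathVert y (i + 1)) := by
    show B.EndsAt _ (B.src _)
    rw [← y.2 i, ← he]
    exact B.endsAt_snoc r e hr
  exact ⟨B.glue y (i + 1) _ hend,
    (glue_apply_of_lt (lt_add_one i)).trans (B.snoc_apply_last r e hr),
    fun j hj => glue_apply_of_le hj⟩

theorem pathLT_iff_finLT {y z : B.PathSpace} {n : ℕ} (h : ∀ i, n ≤ i → y.1 i = z.1 i) :
    B.pathLT y z ↔ B.finLT (B.pathInit y n) (B.pathInit z n) := by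
  constructor
  · rintro ⟨N, hlt, hagree⟩
    have hN : N < n := by
      by_contra! hN
      exact B.elt_irrefl _ _ (h N hN ▸ hlt)
    exact ⟨N, hN, hlt, fun i _ hNi => hagree i hNi⟩
  · rintro ⟨N, hN, hlt, hagree⟩
    refine ⟨N, hlt, fun i hNi => ?_⟩
    rcases Nat.lt_or_ge i n with hi | hi
    exacts [hagree i hi hNi, h i hi]

def IsMinUpTo (N : ℕ) (y : B.PathSpace) : Prop := ∀ i < N, B.IsMinEdge (y.1 i)

theorem isMinUpTo_glue_of_isMin {x : B.PathSpace} {n : ℕ} {p : B.Fiber n (B.pathVert x n)}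
    (hp : IsMin p) : B.IsMinUpTo n (B.glue x n p.1 p.2) := by
  intro i hi e he
  obtain ⟨z, hzi, hz⟩ := B.exists_apply_eq_of_tgt_eq _ (B.elt_tgt i e _ he)
  have hzx : ∀ j, n ≤ j → z.1 j = (B.glue x n p.1 p.2).1 j := fun j hj => hz j (by omega)
  have hlt := (B.pathLT_iff_finLT hzx).1 ⟨i, hzi ▸ he, hz⟩
  rw [pathInit_glue] at hlt
  have hzend : B.EndsAt (B.pathInit z n) (B.pathVert x n) :=
    B.endsAt_pathInit_of_eq ((hzx n le_rfl).trans (glue_apply_of_le le_rfl))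
  exact hp.not_lt (b := ⟨_, hzend⟩) hlt

theorem not_isMax_dot {x : B.PathSpace} {n i : ℕ} (hi : i < n) (h : ¬ B.IsMaxEdge (x.1 i)) :
    ¬ IsMax (B.dot x n) := by
  obtain ⟨e, he⟩ := not_forall_not.1 h
  obtain ⟨z, hzi, hz⟩ := B.exists_apply_eq_of_tgt_eq x (B.elt_tgt i _ e he).symm
  have hzx : ∀ j, n ≤ j → x.1 j = z.1 j := fun j hj => (hz j (by omega)).symm
  have hlt := (B.pathLT_iff_finLT hzx).1 ⟨i, hzi ▸ he, fun j hj => (hz j hj).symm⟩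
  exact not_isMax_iff.2 ⟨⟨_, B.endsAt_pathInit_of_eq (hzx n le_rfl).symm⟩, hlt⟩

section Vershik

variable {B} {T : B.PathSpace ≃ B.PathSpace}

theorem IsVershik.apply_glue_of_covBy (hV : B.IsVershik T) {x : B.PathSpace} {n : ℕ}
    {v : B.V n} {p q : B.Fiber n v} (hpq : p ⋖ q) (hp : B.EndsAt p.1 (B.pathVert x n))
    (hq : B.EndsAt q.1 (B.pathVert x n)) : T (B.glue x n p.1 hp) = B.glue x n q.1 hq := by
  set y := B.glue x n p.1 hp
  set g := B.glue x n q.1 hq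
  have hyg_agree : ∀ i, n ≤ i → y.1 i = g.1 i := fun i hi =>
    (glue_apply_of_le hi).trans (glue_apply_of_le hi).symm
  have hyg : B.pathLT y g := by
    rw [B.pathLT_iff_finLT hyg_agree, pathInit_glue, pathInit_glue]
    exact hpq.lt
  have hy : ¬ B.IsMaxPath y := fun hmax => by
    obtain ⟨N, hN, -⟩ := hyg
    exact hmax N _ hN
  obtain ⟨⟨M, hM, hyM⟩, hnext⟩ := hV.1 y hy
  -- `T y` differs from `y` only below level `n`: otherwise `g` lies strictly between them
  have hMn : M < n := by
    by_contra! hnM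
    exact hnext g hyg ⟨M, hyg_agree M hnM ▸ hM,
      fun i hi => (hyg_agree i (by omega)).symm.trans (hyM i hi)⟩
  have hTy : ∀ i, n ≤ i → (T y).1 i = x.1 i := fun i hi =>
    (hyM i (by omega)).symm.trans (glue_apply_of_le hi)
  have hr : B.EndsAt (B.pathInit (T y) n) (B.pathVert x n) := B.endsAt_pathInit_of_eq (hTy n le_rfl)
  let r : B.Fiber n v := ⟨_, hr.congr_vertex hq q.2⟩
  have hyTy_agree : ∀ i, n ≤ i → y.1 i = (T y).1 i := fun i hi => hyM i (by omega)
  have hpr : p < r := by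
    have h := (B.pathLT_iff_finLT hyTy_agree).1 ⟨M, hM, hyM⟩
    rwa [pathInit_glue] at h
  rcases lt_trichotomy r q with hrq | hrq | hqr
  · exact absurd hrq (hpq.2 hpr)
  · exact (glue_eq_of_agree (congrArg Subtype.val hrq).symm hTy).symm
  · refine absurd ?_ (hnext g hyg)
    rw [B.pathLT_iff_finLT fun i hi => (hyg_agree i hi).symm.trans (hyTy_agree i hi), pathInit_glue]
    exact hqr

theorem IsVershik.iterate_glue (hV : B.IsVershik T) {x : B.PathSpace} {n K : ℕ}
    (e : Fin K ≃o B.Fiber n (B.pathVert x n)) (j : ℕ) (hj : j < K) :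
    T^[j] (B.glue x n (e ⟨0, by omega⟩).1 (e _).2) = B.glue x n (e ⟨j, hj⟩).1 (e ⟨j, hj⟩).2 := by
  induction j with
  | zero => rfl
  | succ j ih =>
    rw [Function.iterate_succ_apply', ih (by omega)]
    refine hV.apply_glue_of_covBy ((apply_covBy_apply_iff e).2 ?_) _ _
    exact Fin.covBy_iff.2 (Order.covBy_add_one j)

theorem iterZ_neg_natCast_of_iterate {c : ℕ} {w y : B.PathSpace} (h : T^[c] w = y) :
    B.iterZ T (-(c : ℤ)) y = w := by
  rw [iterZ, zpow_neg, zpow_natCast, Equiv.Perm.inv_eq_iff_eq, Equiv.Perm.coe_pow]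
  exact h.symm

theorem IsVershik.isMinUpTo_iterZ_neg (hV : B.IsVershik T) {x : B.PathSpace} {n K : ℕ}
    (e : Fin K ≃o B.Fiber n (B.pathVert x n)) (j : Fin K) (hj : e j = B.dot x n) :
    B.IsMinUpTo n (B.iterZ T (-(j : ℤ)) x) := by
  have hiter := hV.iterate_glue e j j.2
  have hx : B.glue x n (B.dot x n).1 (B.dot x n).2 = x := glue_eq_of_agree rfl fun _ _ => rfl
  rw [show e ⟨j, j.2⟩ = B.dot x n from hj, hx] at hiter
  rw [B.iterZ_neg_natCast_of_iterate hiter]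
  exact B.isMinUpTo_glue_of_isMin (e.isMin_apply.2 fun _ _ => Nat.zero_le _)

theorem IsVershik.exists_isMinUpTo_iterZ_of_kEquivAt (hV : B.IsVershik T) {x x' : B.PathSpace}
    {k n : ℕ} (h : B.KEquivAt k n x x') :
    ∃ m : ℤ, B.IsMinUpTo n (B.iterZ T m x) ∧ B.IsMinUpTo n (B.iterZ T m x') := by
  obtain ⟨φ, hφ, -, hdot⟩ := h
  let φo : B.Fiber n (B.pathVert x n) ≃o B.Fiber n (B.pathVert x' n) :=
    OrderIso.ofRelIsoLT ⟨φ, fun {p q} => (hφ p q).symm⟩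
  let _ := Fintype.ofFinite (B.Fiber n (B.pathVert x n))
  let e := Fintype.orderIsoFinOfCardEq (B.Fiber n (B.pathVert x n)) rfl
  refine ⟨_, hV.isMinUpTo_iterZ_neg e _ (e.apply_symm_apply (B.dot x n)),
    hV.isMinUpTo_iterZ_neg (e.trans φo) _ ?_⟩
  simp only [OrderIso.trans_apply, OrderIso.apply_symm_apply, φo]
  exact hdot

end Vershik

section Topology

attribute [local instance] pathTop

theorem isClopen_setOf_apply_mem (i : ℕ) (s : Set (B.E i)) :
    IsClopen {y : B.PathSpace | y.1 i ∈ s} := by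
  let (n : ℕ) : TopologicalSpace (B.E n) := ⊥
  have (n : ℕ) : DiscreteTopology (B.E n) := ⟨rfl⟩
  exact (isClopen_discrete s).preimage ((continuous_apply i).comp continuous_induced_dom)

theorem compactSpace_pathSpace : CompactSpace B.PathSpace := by
  let (n : ℕ) : TopologicalSpace (B.E n) := ⊥
  have (n : ℕ) : DiscreteTopology (B.E n) := ⟨rfl⟩
  have hclosed : IsClosed {f : ∀ n, B.E n | ∀ n, B.tgt (f n) = B.src (f (n + 1))} := by
    simp only [Set.ofPred_forall]
    exact isClosed_iInter fun n => (isClosed_discrete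
      {e : B.E n × B.E (n + 1) | B.tgt e.1 = B.src e.2}).preimage
        ((continuous_apply n).prodMk (continuous_apply (n + 1)))
  exact isCompact_iff_compactSpace.mp hclosed.isCompact

attribute [local instance] compactSpace_pathSpace

theorem isOpen_setOf_pathInit_eq (a : B.PathSpace) (ℓ : ℕ) :
    IsOpen {y : B.PathSpace | B.pathInit y ℓ = B.pathInit a ℓ} := by
  simp only [pathInit_eq_pathInit_iff, Set.ofPred_forall]
  exact (Set.finite_lt_nat ℓ).isOpen_biInter fun i _ =>
    (B.isClopen_setOf_apply_mem i {a.1 i}).isOpen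

theorem isClosed_setOf_isMinUpTo (N : ℕ) : IsClosed {y : B.PathSpace | B.IsMinUpTo N y} := by
  simp only [IsMinUpTo, Set.ofPred_forall]
  exact isClosed_iInter fun i => isClosed_iInter fun _ =>
    (B.isClopen_setOf_apply_mem i {e | B.IsMinEdge e}).isClosed

theorem exists_forall_isMinUpTo_pathInit_eq {B' : BDiagram} {f : B.PathSpace → B'.PathSpace}
    (hf : Continuous f) {x₀ : B.PathSpace} (hx₀ : ∀ y, B.IsMinPath y → y = x₀) (ℓ : ℕ) :
    ∃ N, ∀ y, B.IsMinUpTo N y → B'.pathInit (f y) ℓ = B'.pathInit (f x₀) ℓ := by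
  have hU : f ⁻¹' {z | B'.pathInit z ℓ = B'.pathInit (f x₀) ℓ} ∈ nhds x₀ :=
    ((B'.isOpen_setOf_pathInit_eq (f x₀) ℓ).preimage hf).mem_nhds rfl
  have hanti : Antitone fun N => {y : B.PathSpace | B.IsMinUpTo N y} :=
    fun _ _ hNM _ hy i hi => hy i (lt_of_lt_of_le hi hNM)
  refine exists_subset_nhds_of_isCompact' hanti.directed_ge
    (fun N => (B.isClosed_setOf_isMinUpTo N).isCompact) B.isClosed_setOf_isMinUpTo ?_
  intro y hy
  rw [hx₀ y fun i => Set.mem_iInter.1 hy (i + 1) i (lt_add_one i)]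
  exact hU

end Topology

section Odometer

variable {B} {T : B.PathSpace ≃ B.PathSpace}

theorem IsVershik.isMinUpTo_apply_of_isMaxEdge (hV : B.IsVershik T) {b : B.PathSpace} {ℓ : ℕ}
    (hb : ∀ i < ℓ, B.IsMaxEdge (b.1 i)) : B.IsMinUpTo ℓ (T b) := by
  by_cases hmax : B.IsMaxPath b
  · exact fun i _ => hV.2 b hmax i
  obtain ⟨⟨M, hM, hbM⟩, hnext⟩ := hV.1 b hmax
  have hℓM : ℓ ≤ M := by
    by_contra! h
    exact hb M h _ hM
  intro i hi e he
  obtain ⟨z, hzi, hz⟩ := B.exists_apply_eq_of_tgt_eq (T b) (B.elt_tgt i e _ he)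
  -- `z` would lie strictly between `b` and `T b`
  exact hnext z
    ⟨M, (hz M (by omega)).symm ▸ hM, fun j hj => (hbM j hj).trans (hz j (by omega)).symm⟩
    ⟨i, hzi ▸ he, hz⟩

theorem IsVershik.pathInit_apply_eq_of_not_isMaxEdge (hV : B.IsVershik T) {b c : B.PathSpace}
    {ℓ i : ℕ} (hbc : B.pathInit b ℓ = B.pathInit c ℓ) (hi : i < ℓ) (hb : ¬ B.IsMaxEdge (b.1 i)) :
    B.pathInit (T b) ℓ = B.pathInit (T c) ℓ := by
  obtain ⟨q, hq, -⟩ := exists_covBy_le_of_lt (not_isMax_iff.1 (B.not_isMax_dot hi hb)).choose_spec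
  have hbb : B.EndsAt (B.pathInit b ℓ) (B.pathVert b ℓ) := B.pathInit_endsAt b ℓ
  have hbc' : B.EndsAt (B.pathInit b ℓ) (B.pathVert c ℓ) := hbc ▸ B.pathInit_endsAt c ℓ
  have hTb : T (B.glue b ℓ _ hbb) = B.glue b ℓ q.1 q.2 := hV.apply_glue_of_covBy hq hbb q.2
  have hTc : T (B.glue c ℓ _ hbc') = B.glue c ℓ q.1 (q.2.congr_vertex hbb hbc') :=
    hV.apply_glue_of_covBy hq hbc' _
  rw [← glue_eq_of_agree (x := b) (hp := hbb) rfl fun _ _ => rfl,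
    ← glue_eq_of_agree (x := c) (hp := hbc') hbc fun _ _ => rfl, hTb, hTc, pathInit_glue,
    pathInit_glue]

theorem IsVershik.pathInit_apply_eq_iff_of_subsingleton (hV : B.IsVershik T)
    (hodo : ∀ n, Subsingleton (B.V n)) (ℓ : ℕ) (b c : B.PathSpace) :
    B.pathInit (T b) ℓ = B.pathInit (T c) ℓ ↔ B.pathInit b ℓ = B.pathInit c ℓ := by
  refine Equiv.Perm.apply_eq_apply_iff_of_finite T (B.pathInit · ℓ) (fun b c hbc => ?_) b c
  by_cases h : ∃ i < ℓ, ¬ B.IsMaxEdge (b.1 i)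
  · obtain ⟨i, hi, hb⟩ := h
    exact hV.pathInit_apply_eq_of_not_isMaxEdge hbc hi hb
  push Not at h
  have hagree := B.pathInit_eq_pathInit_iff.1 hbc
  refine B.pathInit_eq_pathInit_iff.2 fun i hi => B.eq_of_isMinEdge_of_tgt_eq
    (hV.isMinUpTo_apply_of_isMaxEdge h i hi)
    (hV.isMinUpTo_apply_of_isMaxEdge (fun j hj => hagree j hj ▸ h j hj) i hi)
    (Subsingleton.elim _ _)

end Odometer

end BDiagram

/-- No standard nonexpansive simple, properly ordered
Bratteli–Vershik system is conjugate to any odometer. -/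
theorem sne_not_conjugate_to_odometer
    (S : BVSystem) (hsne : S.B.SNE) :
    ¬ ∃ S' : BVSystem, Conjugate S S' ∧ IsOdometer S' := by
  rintro ⟨S', ⟨φ, hφ, -, hφT, -⟩, hodo⟩
  obtain ⟨x, x', hne, -, hequiv⟩ := hsne 1 le_rfl
  obtain ⟨x₀, -, hx₀⟩ := S.proper.1
  refine hne (φ.injective (S'.B.pathSpace_ext fun i =>
    S'.B.pathInit_eq_pathInit_iff.1 ?_ i (lt_add_one i)))
  obtain ⟨N, hN⟩ := S.B.exists_forall_isMinUpTo_pathInit_eq hφ hx₀ (i + 1)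
  obtain ⟨m, hm, hm'⟩ := S.vershik.exists_isMinUpTo_iterZ_of_kEquivAt (hequiv (N + 2) (by omega))
  let R a b := S'.B.pathInit (φ a) (i + 1) = S'.B.pathInit (φ b) (i + 1)
  have hstep : ∀ a b, R (S.T a) (S.T b) ↔ R a b := fun a b => by
    simp only [R, hφT]
    exact S'.vershik.pathInit_apply_eq_iff_of_subsingleton hodo _ _ _
  refine (Equiv.Perm.zpow_apply_rel_iff S.T hstep m x x').1 ?_
  exact (hN _ fun j hj => hm j (by omega)).trans (hN _ fun j hj => hm' j (by omega)).symm
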